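/- arXiv:2110.07700 — 9 statements merged into one kernel-verified Lean document; each statement's English description precedes it below -/
import Mathlib

section
/- Unbiasedness of the HNCA gradient estimator (Equations 1 and 3): in the single-unit factorized model with reward function r, the function t ↦ ∑_{b,φ,c} μ b * π t φ b * (∏_j κ j (c j) b φ) * r b c (the expected reward) has derivative at t = θ equal to ∑_{b,φ,c} p_θ (b, φ, c) * ((∑_{φ'} ρ φ' b c * g φ' b) * r b c), i.e. the expectation under p_θ of the HNCA estimator Ĝ^HNCA (b, c) = (∑_{φ'} ρ φ' b c * g φ' b) * r b c equals the derivative of the expected reward. -/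
/-!
Differentiating under the finite sums, the derivative of the expected reward is
`∑ μ b * g φ b * (∏ j, κ j (c j) b φ) * r b c`. On the estimator side the factor
`(∑ φ', ρ φ' b c * g φ' b) * r b c` does not depend on `φ`, so summing the joint weights over `φ`
first leaves `μ b` times the normalizer of `ρ`, which cancels it and yields the same sum.
-/

open Finset

theorem sum_mul_mul_sum_div_mul_eq {ι : Type*} [Fintype ι] (p w g : ι → ℝ)
    (hD : ∑ i, p i * w i ≠ 0) :
    (∑ i, p i * w i) * ∑ i, w i / (∑ k, p k * w k) * g i = ∑ i, w i * g i := by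
  rw [mul_sum]
  refine sum_congr rfl fun i _ => ?_
  field_simp

section ExpectedReward

variable {B S X : Type*} [Fintype B] [Fintype S] [Fintype X]

theorem hasDerivAt_sum_mul_policy (μ : B → ℝ) (π : ℝ → S → B → ℝ) (w : X → B → S → ℝ)
    (r : B → X → ℝ) (θ : ℝ) (g : S → B → ℝ)
    (hg : ∀ φ b, HasDerivAt (fun t => π t φ b) (g φ b) θ) :
    HasDerivAt (fun t => ∑ b, ∑ φ, ∑ x, μ b * π t φ b * w x b φ * r b x)
      (∑ b, ∑ φ, ∑ x, μ b * g φ b * w x b φ * r b x) θ :=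
  HasDerivAt.fun_sum fun b _ => HasDerivAt.fun_sum fun φ _ => HasDerivAt.fun_sum fun _ _ =>
    (((hg φ b).const_mul (μ b)).mul_const _).mul_const _

theorem sum_joint_mul_posterior_estimator (μ : B → ℝ) (p : S → B → ℝ) (w : X → B → S → ℝ)
    (g : S → B → ℝ) (r : B → X → ℝ) (hD : ∀ b x, ∑ φ, p φ b * w x b φ ≠ 0) :
    ∑ b, ∑ φ, ∑ x, (μ b * p φ b * w x b φ) *
        ((∑ φ', w x b φ' / (∑ φ'', p φ'' b * w x b φ'') * g φ' b) * r b x)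
      = ∑ b, ∑ φ, ∑ x, μ b * g φ b * w x b φ * r b x := by
  refine sum_congr rfl fun b _ => ?_
  rw [sum_comm]
  conv_rhs => rw [sum_comm]
  refine sum_congr rfl fun x _ => ?_
  calc ∑ φ, (μ b * p φ b * w x b φ) *
          ((∑ φ', w x b φ' / (∑ φ'', p φ'' b * w x b φ'') * g φ' b) * r b x)
      = μ b * ((∑ φ, p φ b * w x b φ) *
          ∑ φ', w x b φ' / (∑ φ'', p φ'' b * w x b φ'') * g φ' b) * r b x := by
        rw [← sum_mul]
        simp only [mul_assoc, ← mul_sum]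
    _ = μ b * (∑ φ, w x b φ * g φ b) * r b x := by
        rw [sum_mul_mul_sum_div_mul_eq _ _ _ (hD b x)]
    _ = ∑ φ, μ b * g φ b * w x b φ * r b x := by
        rw [mul_sum, sum_mul]
        exact sum_congr rfl fun φ _ => by ring

end ExpectedReward

theorem hnca_unbiased_general
    {n : ℕ} {B S : Type*} {C : Fin n → Type*}
    [Fintype B] [Fintype S] [Nonempty S]
    [∀ j, Fintype (C j)]
    (μ : B → ℝ) (π : ℝ → S → B → ℝ) (κ : (j : Fin n) → C j → B → S → ℝ) (θ : ℝ)
    (hπpos : ∀ φ b, 0 < π θ φ b)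
    (hκpos : ∀ j cj b φ, 0 < κ j cj b φ)
    (g : S → B → ℝ) (hg : ∀ φ b, HasDerivAt (fun t => π t φ b) (g φ b) θ)
    (r : B → (∀ j, C j) → ℝ) :
    HasDerivAt
      (fun t => ∑ b, ∑ φ, ∑ c : ∀ j, C j,
        μ b * π t φ b * (∏ j, κ j (c j) b φ) * r b c)
      (∑ b, ∑ φ, ∑ c : ∀ j, C j,
        (μ b * π θ φ b * ∏ j, κ j (c j) b φ) *
          ((∑ φ', ((∏ j, κ j (c j) b φ') /
              (∑ φ'', π θ φ'' b * ∏ j, κ j (c j) b φ'')) * g φ' b) * r b c)) θ := by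
  have hD : ∀ b (c : ∀ j, C j), ∑ φ, π θ φ b * ∏ j, κ j (c j) b φ ≠ 0 := fun b c =>
    (sum_pos (fun φ _ => mul_pos (hπpos φ b) (prod_pos fun j _ => hκpos j (c j) b φ))
      univ_nonempty).ne'
  have hest := sum_joint_mul_posterior_estimator μ (π θ) (fun c b φ => ∏ j, κ j (c j) b φ) g r hD
  have hder := hasDerivAt_sum_mul_policy μ π (fun c b φ => ∏ j, κ j (c j) b φ) r θ g hg
  rw [hest]
  exact hder

/-- Unbiasedness of the HNCA gradient estimator (Equations 1 and 3): the expectation under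
p_θ of the HNCA estimator (∑_{φ'} ρ_Φ(φ') ∂π(φ'|pa)/∂θ) · r equals the derivative of the
expected reward. -/
theorem hnca_unbiased
    {n : ℕ} {B S : Type*} {C : Fin n → Type*}
    [Fintype B] [Fintype S] [Nonempty B] [Nonempty S]
    [∀ j, Fintype (C j)] [∀ j, Nonempty (C j)]
    (μ : B → ℝ) (π : ℝ → S → B → ℝ) (κ : (j : Fin n) → C j → B → S → ℝ) (θ : ℝ)
    (hμpos : ∀ b, 0 < μ b) (hμ1 : ∑ b, μ b = 1)
    (hπ0 : ∀ t φ b, 0 ≤ π t φ b) (hπ1 : ∀ t b, ∑ φ, π t φ b = 1)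
    (hπpos : ∀ φ b, 0 < π θ φ b)
    (hκpos : ∀ j cj b φ, 0 < κ j cj b φ) (hκ1 : ∀ j b φ, ∑ cj, κ j cj b φ = 1)
    (g : S → B → ℝ) (hg : ∀ φ b, HasDerivAt (fun t => π t φ b) (g φ b) θ)
    (r : B → (∀ j, C j) → ℝ) :
    HasDerivAt
      (fun t => ∑ b, ∑ φ, ∑ c : ∀ j, C j,
        μ b * π t φ b * (∏ j, κ j (c j) b φ) * r b c)
      (∑ b, ∑ φ, ∑ c : ∀ j, C j,
        (μ b * π θ φ b * ∏ j, κ j (c j) b φ) *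
          ((∑ φ', ((∏ j, κ j (c j) b φ') /
              (∑ φ'', π θ φ'' b * ∏ j, κ j (c j) b φ'')) * g φ' b) * r b c)) θ :=
  hnca_unbiased_general μ π κ θ hπpos hκpos g hg r
end

section
/- Theorem 1 (variance reduction of HNCA over REINFORCE): in the single-unit factorized model with reward function r, define the REINFORCE estimator Ĝ^RE (b, φ, c) = ((g φ b) / (π θ φ b)) * r b c and the HNCA estimator Ĝ^HNCA (b, φ, c) = (∑_{φ'} ρ φ' b c * g φ' b) * r b c (which does not depend on φ). Then the variance of Ĝ^HNCA under the joint pmf p_θ is at most the variance of Ĝ^RE under p_θ, where for a real-valued function X of (b, φ, c), Var_p(X) = ∑_{b,φ,c} p_θ(b,φ,c) * X(b,φ,c)^2 − (∑_{b,φ,c} p_θ(b,φ,c) * X(b,φ,c))^2. -/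
/-- Theorem 1: the HNCA gradient estimator has (elementwise) variance no larger than
the REINFORCE gradient estimator under the joint distribution p_θ. -/
theorem hnca_variance_le_reinforce
    {n : ℕ} {B S : Type*} {C : Fin n → Type*}
    [Fintype B] [Fintype S] [Nonempty B] [Nonempty S]
    [∀ j, Fintype (C j)] [∀ j, Nonempty (C j)]
    (μ : B → ℝ) (π : ℝ → S → B → ℝ) (κ : (j : Fin n) → C j → B → S → ℝ) (θ : ℝ)
    (hμpos : ∀ b, 0 < μ b) (hμ1 : ∑ b, μ b = 1)
    (hπ0 : ∀ t φ b, 0 ≤ π t φ b) (hπ1 : ∀ t b, ∑ φ, π t φ b = 1)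
    (hπpos : ∀ φ b, 0 < π θ φ b)
    (hκpos : ∀ j cj b φ, 0 < κ j cj b φ) (hκ1 : ∀ j b φ, ∑ cj, κ j cj b φ = 1)
    (g : S → B → ℝ) (hg : ∀ φ b, HasDerivAt (fun t => π t φ b) (g φ b) θ)
    (r : B → (∀ j, C j) → ℝ) :
    (∑ b, ∑ φ, ∑ c : ∀ j, C j,
        (μ b * π θ φ b * ∏ j, κ j (c j) b φ) *
          ((∑ φ', ((∏ j, κ j (c j) b φ') /
              (∑ φ'', π θ φ'' b * ∏ j, κ j (c j) b φ'')) * g φ' b) * r b c) ^ 2) -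
      (∑ b, ∑ φ, ∑ c : ∀ j, C j,
        (μ b * π θ φ b * ∏ j, κ j (c j) b φ) *
          ((∑ φ', ((∏ j, κ j (c j) b φ') /
              (∑ φ'', π θ φ'' b * ∏ j, κ j (c j) b φ'')) * g φ' b) * r b c)) ^ 2 ≤
    (∑ b, ∑ φ, ∑ c : ∀ j, C j,
        (μ b * π θ φ b * ∏ j, κ j (c j) b φ) *
          ((g φ b / π θ φ b) * r b c) ^ 2) -
      (∑ b, ∑ φ, ∑ c : ∀ j, C j,
        (μ b * π θ φ b * ∏ j, κ j (c j) b φ) *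
          ((g φ b / π θ φ b) * r b c)) ^ 2 := by
  classical
  set Z : B → (∀ j, C j) → ℝ := fun b c => ∑ φ'', π θ φ'' b * ∏ j, κ j (c j) b φ'' with hZ
  have hZpos : ∀ b c, 0 < Z b c := fun b c =>
    Finset.sum_pos (fun φ _ => mul_pos (hπpos φ b)
      (Finset.prod_pos fun j _ => hκpos j (c j) b φ)) Finset.univ_nonempty
  set H : B → (∀ j, C j) → ℝ := fun b c =>
    (∑ φ', ((∏ j, κ j (c j) b φ') / Z b c) * g φ' b) * r b c with hH
  set A : B → (∀ j, C j) → ℝ := fun b c => ∑ φ', (∏ j, κ j (c j) b φ') * g φ' b with hA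
  have hHA : ∀ b c, H b c = A b c / Z b c * r b c := by
    intro b c
    simp only [hH, hA, Finset.sum_div]
    congr 1
    exact Finset.sum_congr rfl fun φ' _ => by ring
  -- means are equal
  have hmean : (∑ b, ∑ φ, ∑ c : ∀ j, C j,
        (μ b * π θ φ b * ∏ j, κ j (c j) b φ) * (H b c))
      = ∑ b, ∑ φ, ∑ c : ∀ j, C j,
        (μ b * π θ φ b * ∏ j, κ j (c j) b φ) * ((g φ b / π θ φ b) * r b c) := by
    refine Finset.sum_congr rfl fun b _ => ?_
    rw [Finset.sum_comm, Finset.sum_comm (γ := S)]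
    refine Finset.sum_congr rfl fun c _ => ?_
    have hmuZ : (∑ φ, μ b * π θ φ b * ∏ j, κ j (c j) b φ) = μ b * Z b c := by
      rw [hZ, Finset.mul_sum]; exact Finset.sum_congr rfl fun φ _ => by ring
    have h1 : ∑ φ, (μ b * π θ φ b * ∏ j, κ j (c j) b φ) * (H b c)
        = μ b * (Z b c * H b c) := by
      rw [← Finset.sum_mul, hmuZ, mul_assoc]
    have h2 : ∑ φ, (μ b * π θ φ b * ∏ j, κ j (c j) b φ) * ((g φ b / π θ φ b) * r b c)
        = μ b * (A b c * r b c) := by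
      rw [hA, Finset.sum_mul, Finset.mul_sum]
      refine Finset.sum_congr rfl fun φ _ => ?_
      have hp := (hπpos φ b).ne'
      field_simp
    rw [h1, h2, hHA]
    have hz := (hZpos b c).ne'
    field_simp
  -- second moments
  have hsq : (∑ b, ∑ φ, ∑ c : ∀ j, C j,
        (μ b * π θ φ b * ∏ j, κ j (c j) b φ) * (H b c) ^ 2)
      ≤ ∑ b, ∑ φ, ∑ c : ∀ j, C j,
        (μ b * π θ φ b * ∏ j, κ j (c j) b φ) * ((g φ b / π θ φ b) * r b c) ^ 2 := by
    refine Finset.sum_le_sum fun b _ => ?_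
    rw [Finset.sum_comm, Finset.sum_comm (γ := S)]
    refine Finset.sum_le_sum fun c _ => ?_
    have h1 : ∑ φ, (μ b * π θ φ b * ∏ j, κ j (c j) b φ) * (H b c) ^ 2
        = μ b * ((A b c * r b c) ^ 2 / Z b c) := by
      rw [← Finset.sum_mul, show (∑ φ, μ b * π θ φ b * ∏ j, κ j (c j) b φ)
            = μ b * Z b c by rw [hZ, Finset.mul_sum]; exact Finset.sum_congr rfl fun φ _ => by ring,
        hHA]
      have hz := (hZpos b c).ne'
      field_simp
    have h2 : ∀ φ, (μ b * π θ φ b * ∏ j, κ j (c j) b φ) * ((g φ b / π θ φ b) * r b c) ^ 2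
        = μ b * (((∏ j, κ j (c j) b φ) * g φ b * r b c) ^ 2 / (π θ φ b * ∏ j, κ j (c j) b φ)) := by
      intro φ
      have hp := (hπpos φ b).ne'
      have hk : (∏ j, κ j (c j) b φ) ≠ 0 :=
        (Finset.prod_pos fun j _ => hκpos j (c j) b φ).ne'
      field_simp
    rw [h1, funext h2, ← Finset.mul_sum]
    refine mul_le_mul_of_nonneg_left ?_ (hμpos b).le
    have key := Finset.sq_sum_div_le_sum_sq_div (Finset.univ : Finset S)
      (fun φ => (∏ j, κ j (c j) b φ) * g φ b * r b c)
      (g := fun φ => π θ φ b * ∏ j, κ j (c j) b φ)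
      (fun φ _ => mul_pos (hπpos φ b) (Finset.prod_pos fun j _ => hκpos j (c j) b φ))
    calc (A b c * r b c) ^ 2 / Z b c
        = (∑ φ, (∏ j, κ j (c j) b φ) * g φ b * r b c) ^ 2 / ∑ φ, π θ φ b * ∏ j, κ j (c j) b φ := by
          rw [hA, hZ, Finset.sum_mul]
      _ ≤ _ := key
  -- assemble
  have e1 : (∑ b, ∑ φ, ∑ c : ∀ j, C j,
        (μ b * π θ φ b * ∏ j, κ j (c j) b φ) *
          ((∑ φ', ((∏ j, κ j (c j) b φ') /
              (∑ φ'', π θ φ'' b * ∏ j, κ j (c j) b φ'')) * g φ' b) * r b c))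
      = ∑ b, ∑ φ, ∑ c : ∀ j, C j,
        (μ b * π θ φ b * ∏ j, κ j (c j) b φ) * (H b c) := rfl
  have e2 : (∑ b, ∑ φ, ∑ c : ∀ j, C j,
        (μ b * π θ φ b * ∏ j, κ j (c j) b φ) *
          ((∑ φ', ((∏ j, κ j (c j) b φ') /
              (∑ φ'', π θ φ'' b * ∏ j, κ j (c j) b φ'')) * g φ' b) * r b c) ^ 2)
      = ∑ b, ∑ φ, ∑ c : ∀ j, C j,
        (μ b * π θ φ b * ∏ j, κ j (c j) b φ) * (H b c) ^ 2 := rfl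
  rw [e1, e2, hmean]
  exact sub_le_sub_right hsq _
end

section
/- The HNCA estimator is the conditional expectation of the REINFORCE estimator given the Markov blanket and the reward: in the single-unit factorized model extended with a random reward with finite value type Rt, reward kernel τ and value map v, for every (b, c, r') one has ∑_φ ( q(b, φ, c, r') / ∑_{φ'} q(b, φ', c, r') ) * ((g φ b) / (π θ φ b)) * v r' = (∑_φ ρ φ b c * g φ b) * v r', where q(b, φ, c, r') = μ b * π θ φ b * (∏_j κ j (c j) b φ) * τ r' b c is the joint pmf; i.e. E[Ĝ^RE | mb(Φ), R] = Ĝ^HNCA. -/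
/-- The HNCA estimator is the conditional expectation of the REINFORCE estimator given
the Markov blanket and the reward: E[Ĝ^RE | mb(Φ), R] = Ĝ^HNCA. -/
theorem hnca_is_conditional_expectation_of_reinforce
    {n : ℕ} {B S Rt : Type*} {C : Fin n → Type*}
    [Fintype B] [Fintype S] [Fintype Rt] [Nonempty B] [Nonempty S] [Nonempty Rt]
    [∀ j, Fintype (C j)] [∀ j, Nonempty (C j)]
    (μ : B → ℝ) (π : ℝ → S → B → ℝ) (κ : (j : Fin n) → C j → B → S → ℝ) (θ : ℝ)
    (hμpos : ∀ b, 0 < μ b) (hμ1 : ∑ b, μ b = 1)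
    (hπ0 : ∀ t φ b, 0 ≤ π t φ b) (hπ1 : ∀ t b, ∑ φ, π t φ b = 1)
    (hπpos : ∀ φ b, 0 < π θ φ b)
    (hκpos : ∀ j cj b φ, 0 < κ j cj b φ) (hκ1 : ∀ j b φ, ∑ cj, κ j cj b φ = 1)
    (g : S → B → ℝ) (hg : ∀ φ b, HasDerivAt (fun t => π t φ b) (g φ b) θ)
    (v : Rt → ℝ) (τ : Rt → B → (∀ j, C j) → ℝ)
    (hτpos : ∀ r' b c, 0 < τ r' b c) (hτ1 : ∀ b c, ∑ r', τ r' b c = 1) :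
    ∀ (b : B) (c : ∀ j, C j) (r' : Rt),
      (∑ φ, ((μ b * π θ φ b * (∏ j, κ j (c j) b φ) * τ r' b c) /
            (∑ φ', μ b * π θ φ' b * (∏ j, κ j (c j) b φ') * τ r' b c)) *
          ((g φ b / π θ φ b) * v r')) =
        (∑ φ, ((∏ j, κ j (c j) b φ) /
            (∑ φ', π θ φ' b * ∏ j, κ j (c j) b φ')) * g φ b) * v r' := by
  intro b c r'
  have hD : 0 < ∑ φ', π θ φ' b * ∏ j, κ j (c j) b φ' :=
    Finset.sum_pos (fun φ _ => mul_pos (hπpos φ b)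
      (Finset.prod_pos fun j _ => hκpos j (c j) b φ)) Finset.univ_nonempty
  have hμτ : 0 < μ b * τ r' b c := mul_pos (hμpos b) (hτpos r' b c)
  have hden : (∑ φ', μ b * π θ φ' b * (∏ j, κ j (c j) b φ') * τ r' b c)
      = (μ b * τ r' b c) * ∑ φ', π θ φ' b * ∏ j, κ j (c j) b φ' := by
    rw [Finset.mul_sum]; apply Finset.sum_congr rfl; intros; ring
  rw [hden, Finset.sum_mul]
  apply Finset.sum_congr rfl
  intro φ _
  rw [show μ b * π θ φ b * (∏ j, κ j (c j) b φ) * τ r' b c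
      = (μ b * τ r' b c) * (π θ φ b * ∏ j, κ j (c j) b φ) by ring,
    mul_div_mul_left _ _ (ne_of_gt hμτ)]
  have key : (π θ φ b * ∏ j, κ j (c j) b φ) / (∑ φ', π θ φ' b * ∏ j, κ j (c j) b φ') *
      (g φ b / π θ φ b * v r')
      = (π θ φ b / π θ φ b) *
        (((∏ j, κ j (c j) b φ) / (∑ φ', π θ φ' b * ∏ j, κ j (c j) b φ')) * g φ b * v r') := by
    ring
  rw [key, div_self (ne_of_gt (hπpos φ b)), one_mul]
end

section
/- Unbiasedness of the f-HNCA component estimator in the mediated case (Equation 5, Appendix F): in the single-unit factorized model extended with a downstream variable W, for any function component f : S → B → (Π j, C j) → W → ℝ (which may depend directly on Φ and on downstream variables), ∑_{b,φ,c,w} q(b,φ,c,w) * ((g φ b) / (π θ φ b)) * f φ b c w = ∑_{b,φ,c,w} q(b,φ,c,w) * (∑_{φ'} ρ φ' b c * g φ' b * f φ' b c w), where q(b,φ,c,w) = μ b * π θ φ b * (∏_j κ j (c j) b φ) * ν w b c; i.e. the estimator ∑_{φ'} ρ(φ') (∂π(φ'|pa)/∂θ) f^i_Φ(φ') has the same expectation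 as the score-function term (∂ log π(Φ|pa)/∂θ) f^i. -/
/-- Unbiasedness of the f-HNCA component estimator in the mediated case (Equation 5):
the estimator ∑_{φ'} ρ(φ') (∂π(φ'|pa)/∂θ) f^i_Φ(φ') has the same expectation as the
score-function term (∂ log π(Φ|pa)/∂θ) f^i. -/
theorem fhnca_mediated_same_expectation
    {n : ℕ} {B S W : Type*} {C : Fin n → Type*}
    [Fintype B] [Fintype S] [Fintype W] [Nonempty B] [Nonempty S] [Nonempty W]
    [∀ j, Fintype (C j)] [∀ j, Nonempty (C j)]
    (μ : B → ℝ) (π : ℝ → S → B → ℝ) (κ : (j : Fin n) → C j → B → S → ℝ) (θ : ℝ)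
    (hμpos : ∀ b, 0 < μ b) (hμ1 : ∑ b, μ b = 1)
    (hπ0 : ∀ t φ b, 0 ≤ π t φ b) (hπ1 : ∀ t b, ∑ φ, π t φ b = 1)
    (hπpos : ∀ φ b, 0 < π θ φ b)
    (hκpos : ∀ j cj b φ, 0 < κ j cj b φ) (hκ1 : ∀ j b φ, ∑ cj, κ j cj b φ = 1)
    (g : S → B → ℝ) (hg : ∀ φ b, HasDerivAt (fun t => π t φ b) (g φ b) θ)
    (ν : W → B → (∀ j, C j) → ℝ)
    (hνpos : ∀ w b c, 0 < ν w b c) (hν1 : ∀ b c, ∑ w, ν w b c = 1)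
    (f : S → B → (∀ j, C j) → W → ℝ) :
    (∑ b, ∑ φ, ∑ c : ∀ j, C j, ∑ w,
        (μ b * π θ φ b * (∏ j, κ j (c j) b φ) * ν w b c) *
          ((g φ b / π θ φ b) * f φ b c w)) =
      ∑ b, ∑ φ, ∑ c : ∀ j, C j, ∑ w,
        (μ b * π θ φ b * (∏ j, κ j (c j) b φ) * ν w b c) *
          (∑ φ', ((∏ j, κ j (c j) b φ') /
              (∑ φ'', π θ φ'' b * ∏ j, κ j (c j) b φ'')) * g φ' b * f φ' b c w) := by
  have hD : ∀ (b : B) (c : ∀ j, C j),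
      (0:ℝ) < ∑ φ'', π θ φ'' b * ∏ j, κ j (c j) b φ'' := fun b c =>
    Finset.sum_pos (fun φ _ => mul_pos (hπpos φ b)
      (Finset.prod_pos fun j _ => hκpos j (c j) b φ)) Finset.univ_nonempty
  refine Finset.sum_congr rfl fun b _ => ?_
  rw [Finset.sum_comm]
  conv_rhs => rw [Finset.sum_comm]
  refine Finset.sum_congr rfl fun c _ => ?_
  rw [Finset.sum_comm]
  conv_rhs => rw [Finset.sum_comm]
  refine Finset.sum_congr rfl fun w _ => ?_
  have hπne : ∀ φ, (π θ φ b) ≠ 0 := fun φ => (hπpos φ b).ne'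
  have hDne : (∑ φ'', π θ φ'' b * ∏ j, κ j (c j) b φ'') ≠ 0 := (hD b c).ne'
  have lhs_eq : (∑ φ, (μ b * π θ φ b * (∏ j, κ j (c j) b φ) * ν w b c) *
        ((g φ b / π θ φ b) * f φ b c w)) =
      ∑ φ, μ b * (∏ j, κ j (c j) b φ) * ν w b c * g φ b * f φ b c w := by
    refine Finset.sum_congr rfl fun φ _ => ?_
    rw [show (μ b * π θ φ b * (∏ j, κ j (c j) b φ) * ν w b c) *
          ((g φ b / π θ φ b) * f φ b c w)
        = (μ b * (∏ j, κ j (c j) b φ) * ν w b c * g φ b * f φ b c w) *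
            (π θ φ b / π θ φ b) from by ring, div_self (hπne φ), mul_one]
  rw [lhs_eq]
  simp only [Finset.mul_sum]
  rw [Finset.sum_comm]
  refine Finset.sum_congr rfl fun φ' _ => ?_
  have : (∑ φ, (μ b * π θ φ b * (∏ j, κ j (c j) b φ) * ν w b c) *
        ((∏ j, κ j (c j) b φ') / (∑ φ'', π θ φ'' b * ∏ j, κ j (c j) b φ'') *
          g φ' b * f φ' b c w)) =
      (∑ φ, π θ φ b * ∏ j, κ j (c j) b φ) *
        (μ b * ν w b c * ((∏ j, κ j (c j) b φ') /
          (∑ φ'', π θ φ'' b * ∏ j, κ j (c j) b φ'') * g φ' b * f φ' b c w)) := by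
    rw [Finset.sum_mul]
    exact Finset.sum_congr rfl fun φ _ => by ring
  rw [this]
  field_simp
end

section
/- Unbiasedness of the f-HNCA component estimator in the unmediated case (Appendix F): in the model with no connections mediated through children, for any function component f : S → B → V → ℝ, ∑_{b,φ,v} q'(b,φ,v) * ((g φ b) / (π θ φ b)) * f φ b v = ∑_{b,φ,v} q'(b,φ,v) * (∑_{φ'} g φ' b * f φ' b v), where q'(b,φ,v) = μ b * π θ φ b * ν' v b; i.e. the estimator ∑_{φ'} (∂π(φ'|pa)/∂θ) f^i_Φ(φ') has the same expectation as the score-function term (∂ log π(Φ|pa)/∂θ) f^i when no child of Φ is an ancestor of f^i. -/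
/-- Unbiasedness of the f-HNCA component estimator in the unmediated case:
when no child of Φ is an ancestor of f^i, the estimator ∑_{φ'} (∂π(φ'|pa)/∂θ) f^i_Φ(φ')
has the same expectation as the score-function term (∂ log π(Φ|pa)/∂θ) f^i. -/
theorem fhnca_unmediated_same_expectation
    {B S V : Type*} [Fintype B] [Fintype S] [Fintype V]
    [Nonempty B] [Nonempty S] [Nonempty V]
    (μ : B → ℝ) (π : ℝ → S → B → ℝ) (ν' : V → B → ℝ) (θ : ℝ)
    (hμ0 : ∀ b, 0 ≤ μ b) (hμ1 : ∑ b, μ b = 1)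
    (hπ0 : ∀ t φ b, 0 ≤ π t φ b) (hπ1 : ∀ t b, ∑ φ, π t φ b = 1)
    (hπpos : ∀ φ b, 0 < π θ φ b)
    (hν0 : ∀ v b, 0 ≤ ν' v b) (hν1 : ∀ b, ∑ v, ν' v b = 1)
    (g : S → B → ℝ) (hg : ∀ φ b, HasDerivAt (fun t => π t φ b) (g φ b) θ)
    (f : S → B → V → ℝ) :
    (∑ b, ∑ φ, ∑ v,
        (μ b * π θ φ b * ν' v b) * ((g φ b / π θ φ b) * f φ b v)) =
      ∑ b, ∑ φ, ∑ v,
        (μ b * π θ φ b * ν' v b) * (∑ φ', g φ' b * f φ' b v) := by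
  refine Finset.sum_congr rfl fun b _ => ?_
  have key : ∀ φ v, (μ b * π θ φ b * ν' v b) * ((g φ b / π θ φ b) * f φ b v)
      = π θ φ b * (μ b * ν' v b * (g φ b / π θ φ b * f φ b v)) := by
    intro φ v; ring
  calc ∑ φ, ∑ v, (μ b * π θ φ b * ν' v b) * ((g φ b / π θ φ b) * f φ b v)
      = ∑ φ, ∑ v, μ b * ν' v b * (g φ b * f φ b v) := by
        refine Finset.sum_congr rfl fun φ _ => Finset.sum_congr rfl fun v _ => ?_
        field_simp [(hπpos φ b).ne']
    _ = ∑ v, ∑ φ, μ b * ν' v b * (g φ b * f φ b v) := Finset.sum_comm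
    _ = ∑ v, μ b * ν' v b * (∑ φ', g φ' b * f φ' b v) := by
        refine Finset.sum_congr rfl fun v _ => ?_
        rw [Finset.mul_sum]
    _ = ∑ φ, ∑ v, (μ b * π θ φ b * ν' v b) * (∑ φ', g φ' b * f φ' b v) := by
        rw [Finset.sum_comm]
        refine Finset.sum_congr rfl fun v _ => ?_
        rw [← Finset.sum_mul, ← Finset.sum_mul, ← Finset.mul_sum, hπ1 θ b, mul_one]
end

section
/- Variance reduction of the f-HNCA component estimator, mediated case (Appendix G): in the single-unit factorized model extended with a downstream variable W, for any function component f : S → B → (Π j, C j) → W → ℝ, the variance under the joint pmf q of the f-HNCA estimator (b, φ, c, w) ↦ ∑_{φ'} ρ φ' b c * g φ' b * f φ' b c w is at most the variance under q of the REINFORCE estimator (b, φ, c, w) ↦ ((g φ b) / (π θ φ b)) * f φ b c w, where q(b,φ,c,w) = μ b * π θ φ b * (∏_j κ j (c j) b φ) * ν w b c and Var_q(X) = ∑ q * X^2 − (∑ q * X)^2. -/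
open Finset

/-- Jensen's inequality for the square function with finite probability weights. -/
lemma fhnca_jensen_sq {S : Type*} [Fintype S] (p x : S → ℝ) (hp0 : ∀ φ, 0 ≤ p φ)
    (hp1 : ∑ φ, p φ = 1) : (∑ φ, p φ * x φ) ^ 2 ≤ ∑ φ, p φ * x φ ^ 2 := by
  have h := sum_mul_sq_le_sq_mul_sq Finset.univ (fun φ => Real.sqrt (p φ))
    (fun φ => Real.sqrt (p φ) * x φ)
  have e1 : ∀ φ : S, Real.sqrt (p φ) * (Real.sqrt (p φ) * x φ) = p φ * x φ := by
    intro φ; rw [← mul_assoc, Real.mul_self_sqrt (hp0 φ)]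
  have e2 : ∀ φ : S, (Real.sqrt (p φ)) ^ 2 = p φ := fun φ => Real.sq_sqrt (hp0 φ)
  have e3 : ∀ φ : S, (Real.sqrt (p φ) * x φ) ^ 2 = p φ * x φ ^ 2 := by
    intro φ; rw [mul_pow, e2]
  simp only [e1, e2, e3, hp1, one_mul] at h
  exact h

/-- Variance reduction of the f-HNCA component estimator, mediated case (Appendix G):
the f-HNCA component estimator has variance at most that of the REINFORCE component
estimator under the joint distribution q. -/
theorem fhnca_mediated_variance_le_reinforce
    {n : ℕ} {B S W : Type*} {C : Fin n → Type*}
    [Fintype B] [Fintype S] [Fintype W] [Nonempty B] [Nonempty S] [Nonempty W]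
    [∀ j, Fintype (C j)] [∀ j, Nonempty (C j)]
    (μ : B → ℝ) (π : ℝ → S → B → ℝ) (κ : (j : Fin n) → C j → B → S → ℝ) (θ : ℝ)
    (hμpos : ∀ b, 0 < μ b) (hμ1 : ∑ b, μ b = 1)
    (hπ0 : ∀ t φ b, 0 ≤ π t φ b) (hπ1 : ∀ t b, ∑ φ, π t φ b = 1)
    (hπpos : ∀ φ b, 0 < π θ φ b)
    (hκpos : ∀ j cj b φ, 0 < κ j cj b φ) (hκ1 : ∀ j b φ, ∑ cj, κ j cj b φ = 1)
    (g : S → B → ℝ) (hg : ∀ φ b, HasDerivAt (fun t => π t φ b) (g φ b) θ)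
    (ν : W → B → (∀ j, C j) → ℝ)
    (hνpos : ∀ w b c, 0 < ν w b c) (hν1 : ∀ b c, ∑ w, ν w b c = 1)
    (f : S → B → (∀ j, C j) → W → ℝ) :
    (∑ b, ∑ φ, ∑ c : ∀ j, C j, ∑ w,
        (μ b * π θ φ b * (∏ j, κ j (c j) b φ) * ν w b c) *
          (∑ φ', ((∏ j, κ j (c j) b φ') /
              (∑ φ'', π θ φ'' b * ∏ j, κ j (c j) b φ'')) * g φ' b * f φ' b c w) ^ 2) -
      (∑ b, ∑ φ, ∑ c : ∀ j, C j, ∑ w,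
        (μ b * π θ φ b * (∏ j, κ j (c j) b φ) * ν w b c) *
          (∑ φ', ((∏ j, κ j (c j) b φ') /
              (∑ φ'', π θ φ'' b * ∏ j, κ j (c j) b φ'')) * g φ' b * f φ' b c w)) ^ 2 ≤
    (∑ b, ∑ φ, ∑ c : ∀ j, C j, ∑ w,
        (μ b * π θ φ b * (∏ j, κ j (c j) b φ) * ν w b c) *
          ((g φ b / π θ φ b) * f φ b c w) ^ 2) -
      (∑ b, ∑ φ, ∑ c : ∀ j, C j, ∑ w,
        (μ b * π θ φ b * (∏ j, κ j (c j) b φ) * ν w b c) *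
          ((g φ b / π θ φ b) * f φ b c w)) ^ 2 := by
  classical
  set P : B → (∀ j, C j) → S → ℝ := fun b c φ => ∏ j, κ j (c j) b φ with hP
  set Z : B → (∀ j, C j) → ℝ := fun b c => ∑ φ'', π θ φ'' b * P b c φ'' with hZ
  have hPpos : ∀ b c φ, 0 < P b c φ := fun b c φ =>
    Finset.prod_pos fun j _ => hκpos j (c j) b φ
  have hZpos : ∀ b c, 0 < Z b c := fun b c =>
    Finset.sum_pos (fun φ _ => mul_pos (hπpos φ b) (hPpos b c φ)) univ_nonempty
  -- the HNCA estimator (constant in φ)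
  set Y : B → (∀ j, C j) → W → ℝ := fun b c w =>
    ∑ φ', (P b c φ' / Z b c) * g φ' b * f φ' b c w with hY
  -- the REINFORCE estimator
  set X : S → B → (∀ j, C j) → W → ℝ := fun φ b c w => (g φ b / π θ φ b) * f φ b c w with hX
  -- conditional weights
  set p : B → (∀ j, C j) → S → ℝ := fun b c φ => π θ φ b * P b c φ / Z b c with hp
  have hp0 : ∀ b c φ, 0 ≤ p b c φ := fun b c φ =>
    div_nonneg (mul_nonneg (hπpos φ b).le (hPpos b c φ).le) (hZpos b c).le
  have hp1 : ∀ b c, ∑ φ, p b c φ = 1 := by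
    intro b c
    rw [hp]
    simp only [← Finset.sum_div]
    rw [div_eq_one_iff_eq (hZpos b c).ne']
  have hYpx : ∀ b c w, Y b c w = ∑ φ', p b c φ' * X φ' b c w := by
    intro b c w
    refine Finset.sum_congr rfl fun φ' _ => ?_
    simp only [hp, hX]
    field_simp [(hπpos φ' b).ne', (hZpos b c).ne']
  -- swap sums helper
  have swap : ∀ (F : B → S → (∀ j, C j) → W → ℝ),
      ∑ b, ∑ φ, ∑ c : ∀ j, C j, ∑ w, F b φ c w
        = ∑ b, ∑ c : ∀ j, C j, ∑ w, ∑ φ, F b φ c w := by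
    intro F
    refine Finset.sum_congr rfl fun b _ => ?_
    rw [Finset.sum_comm]
    exact Finset.sum_congr rfl fun c _ => Finset.sum_comm
  -- equality of means
  have hmean :
      (∑ b, ∑ φ, ∑ c : ∀ j, C j, ∑ w,
        (μ b * π θ φ b * P b c φ * ν w b c) * Y b c w)
      = ∑ b, ∑ φ, ∑ c : ∀ j, C j, ∑ w,
        (μ b * π θ φ b * P b c φ * ν w b c) * X φ b c w := by
    rw [swap (fun b φ c w => (μ b * π θ φ b * P b c φ * ν w b c) * Y b c w),
        swap (fun b φ c w => (μ b * π θ φ b * P b c φ * ν w b c) * X φ b c w)]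
    refine Finset.sum_congr rfl fun b _ => Finset.sum_congr rfl fun c _ =>
      Finset.sum_congr rfl fun w _ => ?_
    have hl : ∑ φ, (μ b * π θ φ b * P b c φ * ν w b c) * Y b c w
        = (μ b * ν w b c) * (Z b c * Y b c w) := by
      simp only [hZ, Finset.sum_mul, Finset.mul_sum]
      exact Finset.sum_congr rfl fun φ _ => by ring
    rw [hl, hYpx]
    simp only [Finset.mul_sum]
    refine Finset.sum_congr rfl fun φ _ => ?_
    simp only [hp, hX]
    field_simp [(hπpos φ b).ne', (hZpos b c).ne']
  -- second moment inequality
  have hsq :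
      (∑ b, ∑ φ, ∑ c : ∀ j, C j, ∑ w,
        (μ b * π θ φ b * P b c φ * ν w b c) * (Y b c w) ^ 2)
      ≤ ∑ b, ∑ φ, ∑ c : ∀ j, C j, ∑ w,
        (μ b * π θ φ b * P b c φ * ν w b c) * (X φ b c w) ^ 2 := by
    rw [swap (fun b φ c w => (μ b * π θ φ b * P b c φ * ν w b c) * (Y b c w) ^ 2),
        swap (fun b φ c w => (μ b * π θ φ b * P b c φ * ν w b c) * (X φ b c w) ^ 2)]
    refine Finset.sum_le_sum fun b _ => Finset.sum_le_sum fun c _ =>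
      Finset.sum_le_sum fun w _ => ?_
    have hjen : (Y b c w) ^ 2 ≤ ∑ φ, p b c φ * (X φ b c w) ^ 2 := by
      rw [hYpx]
      exact fhnca_jensen_sq (p b c) (fun φ => X φ b c w) (hp0 b c) (hp1 b c)
    have hl : ∑ φ, (μ b * π θ φ b * P b c φ * ν w b c) * (Y b c w) ^ 2
        = (μ b * ν w b c) * (Z b c * (Y b c w) ^ 2) := by
      simp only [hZ, Finset.sum_mul, Finset.mul_sum]
      exact Finset.sum_congr rfl fun φ _ => by ring
    have hr : ∑ φ, (μ b * π θ φ b * P b c φ * ν w b c) * (X φ b c w) ^ 2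
        = (μ b * ν w b c) * (Z b c * ∑ φ, p b c φ * (X φ b c w) ^ 2) := by
      simp only [Finset.mul_sum]
      refine Finset.sum_congr rfl fun φ _ => ?_
      simp only [hp, hX]
      field_simp [(hπpos φ b).ne', (hZpos b c).ne']
    rw [hl, hr]
    have hmn : 0 ≤ μ b * ν w b c := (mul_pos (hμpos b) (hνpos w b c)).le
    exact mul_le_mul_of_nonneg_left
      (mul_le_mul_of_nonneg_left hjen (hZpos b c).le) hmn
  calc
    (∑ b, ∑ φ, ∑ c : ∀ j, C j, ∑ w,
        (μ b * π θ φ b * P b c φ * ν w b c) * (Y b c w) ^ 2)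
      - (∑ b, ∑ φ, ∑ c : ∀ j, C j, ∑ w,
        (μ b * π θ φ b * P b c φ * ν w b c) * Y b c w) ^ 2
      = (∑ b, ∑ φ, ∑ c : ∀ j, C j, ∑ w,
        (μ b * π θ φ b * P b c φ * ν w b c) * (Y b c w) ^ 2)
      - (∑ b, ∑ φ, ∑ c : ∀ j, C j, ∑ w,
        (μ b * π θ φ b * P b c φ * ν w b c) * X φ b c w) ^ 2 := by rw [hmean]
    _ ≤ (∑ b, ∑ φ, ∑ c : ∀ j, C j, ∑ w,
        (μ b * π θ φ b * P b c φ * ν w b c) * (X φ b c w) ^ 2)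
      - (∑ b, ∑ φ, ∑ c : ∀ j, C j, ∑ w,
        (μ b * π θ φ b * P b c φ * ν w b c) * X φ b c w) ^ 2 :=
      sub_le_sub_right hsq _
end

section
/- Variance reduction of the f-HNCA component estimator, unmediated case (Appendix G): in the model with no connections mediated through children, for any function component f : S → B → V → ℝ, the variance under the joint pmf q' of the estimator (b, φ, v) ↦ ∑_{φ'} g φ' b * f φ' b v is at most the variance under q' of the REINFORCE estimator (b, φ, v) ↦ ((g φ b) / (π θ φ b)) * f φ b v, where q'(b,φ,v) = μ b * π θ φ b * ν' v b and Var_{q'}(X) = ∑ q' * X^2 − (∑ q' * X)^2. -/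
/-!
Conditioned on the parents `b` and the other inputs `v`, the f-HNCA estimator is the constant
`∑ φ', g φ' b * f φ' b v`, while the REINFORCE estimator is its importance-weighted version
`φ ↦ (g φ b * f φ b v) / π θ φ b` under `π θ · b`. The two have the same conditional mean, and by
Cauchy–Schwarz the constant has the smaller conditional second moment; averaging over `b` and
`v` (which enter `q'` as a nonnegative weight independent of `φ`) gives equal means and ordered
second moments, hence ordered variances.
-/

open Finset

section WeightedSums

variable {S : Type*} [Fintype S] {p : S → ℝ}

theorem sum_mul_const_of_sum_eq_one (hp1 : ∑ φ, p φ = 1) (c : ℝ) : ∑ φ, p φ * c = c := by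
  rw [← sum_mul, hp1, one_mul]

theorem sum_mul_div_self (hp : ∀ φ, p φ ≠ 0) (x : S → ℝ) :
    ∑ φ, p φ * (x φ / p φ) = ∑ φ, x φ :=
  sum_congr rfl fun φ _ => mul_div_cancel₀ _ (hp φ)

theorem sq_sum_le_sum_mul_div_sq (hp : ∀ φ, 0 < p φ) (hp1 : ∑ φ, p φ = 1) (x : S → ℝ) :
    (∑ φ, x φ) ^ 2 ≤ ∑ φ, p φ * (x φ / p φ) ^ 2 := by
  have hcs := sq_sum_div_le_sum_sq_div univ x fun φ _ => hp φ
  rw [hp1, div_one] at hcs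
  refine hcs.trans_eq (sum_congr rfl fun φ _ => ?_)
  field_simp [(hp φ).ne']

end WeightedSums

theorem sum_sum_sum_mul_mul_mul {B S V : Type*} [Fintype B] [Fintype S] [Fintype V]
    (μ : B → ℝ) (p : S → B → ℝ) (ν : V → B → ℝ) (F : S → B → V → ℝ) :
    ∑ b, ∑ φ, ∑ v, μ b * p φ b * ν v b * F φ b v =
      ∑ b, ∑ v, μ b * ν v b * ∑ φ, p φ b * F φ b v := by
  refine sum_congr rfl fun b _ => ?_
  rw [sum_comm]
  refine sum_congr rfl fun v _ => ?_
  rw [mul_sum]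
  exact sum_congr rfl fun φ _ => by ring

theorem fhnca_unmediated_variance_le_reinforce_general
    {B S V : Type*} [Fintype B] [Fintype S] [Fintype V]
    (μ : B → ℝ) (π : ℝ → S → B → ℝ) (ν' : V → B → ℝ) (θ : ℝ)
    (hμ0 : ∀ b, 0 ≤ μ b)
    (hπ1 : ∀ t b, ∑ φ, π t φ b = 1)
    (hπpos : ∀ φ b, 0 < π θ φ b)
    (hν0 : ∀ v b, 0 ≤ ν' v b)
    (g : S → B → ℝ)
    (f : S → B → V → ℝ) :
    (∑ b, ∑ φ, ∑ v,
        (μ b * π θ φ b * ν' v b) * (∑ φ', g φ' b * f φ' b v) ^ 2) -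
      (∑ b, ∑ φ, ∑ v,
        (μ b * π θ φ b * ν' v b) * (∑ φ', g φ' b * f φ' b v)) ^ 2 ≤
    (∑ b, ∑ φ, ∑ v,
        (μ b * π θ φ b * ν' v b) * ((g φ b / π θ φ b) * f φ b v) ^ 2) -
      (∑ b, ∑ φ, ∑ v,
        (μ b * π θ φ b * ν' v b) * ((g φ b / π θ φ b) * f φ b v)) ^ 2 := by
  simp only [sum_sum_sum_mul_mul_mul, div_mul_eq_mul_div]
  have hmean : ∀ b v, ∑ φ, π θ φ b * ∑ φ', g φ' b * f φ' b v =
      ∑ φ, π θ φ b * (g φ b * f φ b v / π θ φ b) := fun b v => by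
    rw [sum_mul_const_of_sum_eq_one (hπ1 θ b), sum_mul_div_self fun φ => (hπpos φ b).ne']
  have hsecond : ∀ b v, ∑ φ, π θ φ b * (∑ φ', g φ' b * f φ' b v) ^ 2 ≤
      ∑ φ, π θ φ b * (g φ b * f φ b v / π θ φ b) ^ 2 := fun b v => by
    rw [sum_mul_const_of_sum_eq_one (hπ1 θ b)]
    exact sq_sum_le_sum_mul_div_sq (hπpos · b) (hπ1 θ b) _
  simp only [hmean]
  refine sub_le_sub_right (sum_le_sum fun b _ => sum_le_sum fun v _ => ?_) _
  exact mul_le_mul_of_nonneg_left (hsecond b v) (mul_nonneg (hμ0 b) (hν0 v b))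

/-- Variance reduction of the f-HNCA component estimator, unmediated case (Appendix G):
the estimator ∑_{φ'} (∂π(φ'|pa)/∂θ) f^i_Φ(φ') has variance at most that of the
REINFORCE component estimator under the joint distribution q'. -/
theorem fhnca_unmediated_variance_le_reinforce
    {B S V : Type*} [Fintype B] [Fintype S] [Fintype V]
    [Nonempty B] [Nonempty S] [Nonempty V]
    (μ : B → ℝ) (π : ℝ → S → B → ℝ) (ν' : V → B → ℝ) (θ : ℝ)
    (hμ0 : ∀ b, 0 ≤ μ b) (hμ1 : ∑ b, μ b = 1)
    (hπ0 : ∀ t φ b, 0 ≤ π t φ b) (hπ1 : ∀ t b, ∑ φ, π t φ b = 1)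
    (hπpos : ∀ φ b, 0 < π θ φ b)
    (hν0 : ∀ v b, 0 ≤ ν' v b) (hν1 : ∀ b, ∑ v, ν' v b = 1)
    (g : S → B → ℝ) (hg : ∀ φ b, HasDerivAt (fun t => π t φ b) (g φ b) θ)
    (f : S → B → V → ℝ) :
    (∑ b, ∑ φ, ∑ v,
        (μ b * π θ φ b * ν' v b) * (∑ φ', g φ' b * f φ' b v) ^ 2) -
      (∑ b, ∑ φ, ∑ v,
        (μ b * π θ φ b * ν' v b) * (∑ φ', g φ' b * f φ' b v)) ^ 2 ≤
    (∑ b, ∑ φ, ∑ v,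
        (μ b * π θ φ b * ν' v b) * ((g φ b / π θ φ b) * f φ b v) ^ 2) -
      (∑ b, ∑ φ, ∑ v,
        (μ b * π θ φ b * ν' v b) * ((g φ b / π θ φ b) * f φ b v)) ^ 2 :=
  fhnca_unmediated_variance_le_reinforce_general μ π ν' θ hμ0 hπ1 hπpos hν0 g f
end

section
/- Gradient decomposition into indirect and direct dependence (Equation 4): suppose the function component f : ℝ → S → B → ℝ may depend directly on the parameter, with t ↦ f t φ b having derivative f' φ b at t = θ for every (φ, b). Then t ↦ ∑_{b,φ} μ b * π t φ b * f t φ b has derivative at t = θ equal to ∑_{b,φ} μ b * π θ φ b * ((g φ b) / (π θ φ b)) * f θ φ b + ∑_{b,φ} μ b * π θ φ b * f' φ b; i.e. ∂E[f]/∂θ = E[(∂ log π(Φ|pa)/∂θ) f] + E[∂f/∂θ]. -/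
/-! The product rule for `π t * f t`, with `π' f` rewritten as `π * ((π' / π) * f)`,
i.e. as `π` times the score `∂ log π / ∂θ` times `f`; summing over the finitely many
`(b, φ)` with weights `μ b` gives the two expectations. -/

theorem HasDerivAt.mul_score {p f : ℝ → ℝ} {p' f' x : ℝ} (hp : HasDerivAt p p' x)
    (hf : HasDerivAt f f' x) (hpx : p x ≠ 0) :
    HasDerivAt (fun t => p t * f t) (p x * (p' / p x * f x) + p x * f') x :=
  (hp.mul hf).congr_deriv (by field_simp)

theorem gradient_decomposition_general
    {B S : Type*} [Fintype B] [Fintype S]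
    (μ : B → ℝ)
    (π : ℝ → S → B → ℝ) (θ : ℝ)
    (hπpos : ∀ φ b, 0 < π θ φ b)
    (g : S → B → ℝ) (hg : ∀ φ b, HasDerivAt (fun t => π t φ b) (g φ b) θ)
    (f : ℝ → S → B → ℝ) (f' : S → B → ℝ)
    (hf : ∀ φ b, HasDerivAt (fun t => f t φ b) (f' φ b) θ) :
    HasDerivAt (fun t => ∑ b, ∑ φ, μ b * π t φ b * f t φ b)
      ((∑ b, ∑ φ, μ b * π θ φ b * ((g φ b / π θ φ b) * f θ φ b)) +
        ∑ b, ∑ φ, μ b * π θ φ b * f' φ b) θ := by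
  have hterm : ∀ b φ, HasDerivAt (fun t => μ b * π t φ b * f t φ b)
      (μ b * π θ φ b * (g φ b / π θ φ b * f θ φ b) + μ b * π θ φ b * f' φ b) θ := fun b φ => by
    simpa only [mul_assoc, mul_add] using
      ((hg φ b).mul_score (hf φ b) (hπpos φ b).ne').const_mul (μ b)
  simp only [← Finset.sum_add_distrib]
  exact HasDerivAt.fun_sum fun b _ => HasDerivAt.fun_sum fun φ _ => hterm b φ

/-- Gradient decomposition into indirect and direct dependence (Equation 4):
∂E[f]/∂θ = E[(∂ log π(Φ|pa)/∂θ) f] + E[∂f/∂θ]. -/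
theorem gradient_decomposition
    {B S : Type*} [Fintype B] [Fintype S] [Nonempty B] [Nonempty S]
    (μ : B → ℝ) (hμ0 : ∀ b, 0 ≤ μ b) (hμ1 : ∑ b, μ b = 1)
    (π : ℝ → S → B → ℝ) (θ : ℝ)
    (hπ0 : ∀ t φ b, 0 ≤ π t φ b) (hπ1 : ∀ t b, ∑ φ, π t φ b = 1)
    (hπpos : ∀ φ b, 0 < π θ φ b)
    (g : S → B → ℝ) (hg : ∀ φ b, HasDerivAt (fun t => π t φ b) (g φ b) θ)
    (f : ℝ → S → B → ℝ) (f' : S → B → ℝ)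
    (hf : ∀ φ b, HasDerivAt (fun t => f t φ b) (f' φ b) θ) :
    HasDerivAt (fun t => ∑ b, ∑ φ, μ b * π t φ b * f t φ b)
      ((∑ b, ∑ φ, μ b * π θ φ b * ((g φ b / π θ φ b) * f θ φ b)) +
        ∑ b, ∑ φ, μ b * π θ φ b * f' φ b) θ :=
  gradient_decomposition_general μ π θ hπpos g hg f f' hf
end

section
/- Unbiasedness of the combined f-HNCA gradient estimator (Equation 6 without direct parameter dependence): in the single-unit factorized model extended with a downstream variable W, let f₁ : S → B → (Π j, C j) → W → ℝ be a function component with connections both direct and mediated through the children, and let f₂ : S → B → ℝ be a function component with only a direct connection to Φ. Then t ↦ ∑_{b,φ,c,w} μ b * π t φ b * (∏_j κ j (c j) b φ) * ν w b c * (f₁ φ b c w + f₂ φ b) has derivative at t = θ equal to ∑_{b,φ,c,w} q(b,φ,c,w) * (∑_{φ'} g φ' b * (ρ φ' b c * f₁ φ' b c w + f₂ φ' b)), where q(b,φ,c,w) = μ b * π θ φ b * (∏_j κ j (c j) b φ) * ν w b c; i.e. the f-HNCA estimator that multiplies mediated components by ρ and direct-only components by the raw policy derivative is an unbiased estimator of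 ∂E[f₁ + f₂]/∂θ. -/
/-!
The sums are finite, so the derivative of the expectation replaces `π t` by its derivative `g` in
the joint weight. For the mediated component, summing the sampling weight
`π θ φ b * ∏ j, κ j (c j) b φ` over `φ` gives exactly the denominator of `ρ`, so for every
`(b, c, w)` the factor `ρ` trades the sampled `φ` for the likelihood of the observed children.
For the direct component, `c` and `w` marginalise out on both sides, leaving
`∑ φ, g φ b * f₂ φ b` weighted by `μ`.
-/

open Finset

namespace FHNCA

theorem hasDerivAt_sum_policy {B S Γ W : Type*} [Fintype B] [Fintype S] [Fintype Γ] [Fintype W]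
    (μ : B → ℝ) (π : ℝ → S → B → ℝ) (k : Γ → B → S → ℝ) (ν : W → B → Γ → ℝ)
    (F : S → B → Γ → W → ℝ) (θ : ℝ) (g : S → B → ℝ)
    (hg : ∀ φ b, HasDerivAt (fun t => π t φ b) (g φ b) θ) :
    HasDerivAt (fun t => ∑ b, ∑ φ, ∑ c, ∑ w, μ b * π t φ b * k c b φ * ν w b c * F φ b c w)
      (∑ b, ∑ φ, ∑ c, ∑ w, μ b * g φ b * k c b φ * ν w b c * F φ b c w) θ :=
  HasDerivAt.fun_sum fun b _ => HasDerivAt.fun_sum fun φ _ => HasDerivAt.fun_sum fun _ _ =>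
    HasDerivAt.fun_sum fun _ _ =>
      ((((hg φ b).const_mul (μ b)).mul_const _).mul_const _).mul_const _

theorem sum_sum_sum_mul_kernels_eq {S Γ W : Type*} [Fintype S] [Fintype Γ] [Fintype W]
    (a F : S → ℝ) (k : Γ → S → ℝ) (ν : W → Γ → ℝ)
    (hk : ∀ φ, ∑ c, k c φ = 1) (hν : ∀ c, ∑ w, ν w c = 1) :
    ∑ φ, ∑ c, ∑ w, a φ * k c φ * ν w c * F φ = ∑ φ, a φ * F φ := by
  refine sum_congr rfl fun φ _ => ?_
  calc ∑ c, ∑ w, a φ * k c φ * ν w c * F φ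
      = ∑ c, k c φ * (∑ w, ν w c) * (a φ * F φ) := by
        simp only [sum_mul, mul_sum]
        exact sum_congr rfl fun c _ => sum_congr rfl fun w _ => by ring
    _ = a φ * F φ := by simp only [hν, mul_one, ← sum_mul, hk, one_mul]

theorem mediated_estimator_sum_eq {S Γ W : Type*} [Fintype S] [Fintype Γ] [Fintype W]
    (a : ℝ) (p g : S → ℝ) (k : Γ → S → ℝ) (ν : W → Γ → ℝ) (f : S → Γ → W → ℝ)
    (hZ : ∀ c, ∑ φ, p φ * k c φ ≠ 0) :
    ∑ φ, ∑ c, ∑ w, a * p φ * k c φ * ν w c *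
        ∑ φ', g φ' * (k c φ' / (∑ φ'', p φ'' * k c φ'') * f φ' c w) =
      ∑ φ, ∑ c, ∑ w, a * g φ * k c φ * ν w c * f φ c w := by
  have reorder (F : S → Γ → W → ℝ) : ∑ φ, ∑ c, ∑ w, F φ c w = ∑ c, ∑ w, ∑ φ, F φ c w := by
    rw [sum_comm]; exact sum_congr rfl fun c _ => sum_comm
  rw [reorder, reorder]
  refine sum_congr rfl fun c _ => sum_congr rfl fun w _ => ?_
  have sampling_weight : ∑ φ, a * p φ * k c φ * ν w c = a * ν w c * ∑ φ, p φ * k c φ := by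
    rw [mul_sum]; exact sum_congr rfl fun φ _ => by ring
  rw [← sum_mul, sampling_weight, mul_sum]
  refine sum_congr rfl fun φ _ => ?_
  field_simp [hZ c]

theorem direct_estimator_sum_eq {S Γ W : Type*} [Fintype S] [Fintype Γ] [Fintype W]
    (a : ℝ) (p g f : S → ℝ) (k : Γ → S → ℝ) (ν : W → Γ → ℝ)
    (hp : ∑ φ, p φ = 1) (hk : ∀ φ, ∑ c, k c φ = 1) (hν : ∀ c, ∑ w, ν w c = 1) :
    ∑ φ, ∑ c, ∑ w, a * p φ * k c φ * ν w c * ∑ φ', g φ' * f φ' =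
      ∑ φ, ∑ c, ∑ w, a * g φ * k c φ * ν w c * f φ := by
  rw [sum_sum_sum_mul_kernels_eq (fun φ => a * p φ) (fun _ => ∑ φ', g φ' * f φ') k ν hk hν,
    sum_sum_sum_mul_kernels_eq (fun φ => a * g φ) f k ν hk hν, ← sum_mul, ← mul_sum, hp,
    mul_one, mul_sum]
  exact sum_congr rfl fun φ _ => by ring

end FHNCA

open FHNCA in
theorem fhnca_combined_unbiased_general
    {n : ℕ} {B S W : Type*} {C : Fin n → Type*}
    [Fintype B] [Fintype S] [Fintype W] [Nonempty S]
    [∀ j, Fintype (C j)]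
    (μ : B → ℝ) (π : ℝ → S → B → ℝ) (κ : (j : Fin n) → C j → B → S → ℝ) (θ : ℝ)
    (hπ1 : ∀ t b, ∑ φ, π t φ b = 1)
    (hπpos : ∀ φ b, 0 < π θ φ b)
    (hκpos : ∀ j cj b φ, 0 < κ j cj b φ) (hκ1 : ∀ j b φ, ∑ cj, κ j cj b φ = 1)
    (g : S → B → ℝ) (hg : ∀ φ b, HasDerivAt (fun t => π t φ b) (g φ b) θ)
    (ν : W → B → (∀ j, C j) → ℝ)
    (hν1 : ∀ b c, ∑ w, ν w b c = 1)
    (f₁ : S → B → (∀ j, C j) → W → ℝ) (f₂ : S → B → ℝ) :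
    HasDerivAt
      (fun t => ∑ b, ∑ φ, ∑ c : ∀ j, C j, ∑ w,
        μ b * π t φ b * (∏ j, κ j (c j) b φ) * ν w b c * (f₁ φ b c w + f₂ φ b))
      (∑ b, ∑ φ, ∑ c : ∀ j, C j, ∑ w,
        (μ b * π θ φ b * (∏ j, κ j (c j) b φ) * ν w b c) *
          (∑ φ', g φ' b *
            (((∏ j, κ j (c j) b φ') /
                (∑ φ'', π θ φ'' b * ∏ j, κ j (c j) b φ'')) * f₁ φ' b c w +
              f₂ φ' b))) θ := by
  have hZ : ∀ b (c : ∀ j, C j), ∑ φ, π θ φ b * ∏ j, κ j (c j) b φ ≠ 0 := fun b c =>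
    (sum_pos (fun φ _ => mul_pos (hπpos φ b) (prod_pos fun j _ => hκpos j (c j) b φ))
      univ_nonempty).ne'
  have hK : ∀ b φ, ∑ c : ∀ j, C j, ∏ j, κ j (c j) b φ = 1 := fun b φ => by
    rw [← Fintype.prod_sum (fun j cj => κ j cj b φ)]; simp [hκ1]
  convert hasDerivAt_sum_policy μ π (fun c b φ => ∏ j, κ j (c j) b φ) ν
    (fun φ b c w => f₁ φ b c w + f₂ φ b) θ g hg using 1
  simp only [mul_add, sum_add_distrib]
  congr 1 <;> refine sum_congr rfl fun b _ => ?_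
  · exact (mediated_estimator_sum_eq (μ b) (π θ · b) (g · b) (fun c φ => ∏ j, κ j (c j) b φ)
      (ν · b) (f₁ · b) (hZ b) :)
  · exact (direct_estimator_sum_eq (μ b) (π θ · b) (g · b) (f₂ · b) (fun c φ => ∏ j, κ j (c j) b φ)
      (ν · b) (hπ1 θ b) (hK b) (hν1 b) :)

/-- Unbiasedness of the combined f-HNCA gradient estimator (Equation 6 without direct
parameter dependence): the estimator that multiplies components with mediated connections
by ρ and direct-only components by the raw policy derivative is an unbiased estimator of
∂E[f₁ + f₂]/∂θ. -/
theorem fhnca_combined_unbiased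
    {n : ℕ} {B S W : Type*} {C : Fin n → Type*}
    [Fintype B] [Fintype S] [Fintype W] [Nonempty B] [Nonempty S] [Nonempty W]
    [∀ j, Fintype (C j)] [∀ j, Nonempty (C j)]
    (μ : B → ℝ) (π : ℝ → S → B → ℝ) (κ : (j : Fin n) → C j → B → S → ℝ) (θ : ℝ)
    (hμpos : ∀ b, 0 < μ b) (hμ1 : ∑ b, μ b = 1)
    (hπ0 : ∀ t φ b, 0 ≤ π t φ b) (hπ1 : ∀ t b, ∑ φ, π t φ b = 1)
    (hπpos : ∀ φ b, 0 < π θ φ b)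
    (hκpos : ∀ j cj b φ, 0 < κ j cj b φ) (hκ1 : ∀ j b φ, ∑ cj, κ j cj b φ = 1)
    (g : S → B → ℝ) (hg : ∀ φ b, HasDerivAt (fun t => π t φ b) (g φ b) θ)
    (ν : W → B → (∀ j, C j) → ℝ)
    (hνpos : ∀ w b c, 0 < ν w b c) (hν1 : ∀ b c, ∑ w, ν w b c = 1)
    (f₁ : S → B → (∀ j, C j) → W → ℝ) (f₂ : S → B → ℝ) :
    HasDerivAt
      (fun t => ∑ b, ∑ φ, ∑ c : ∀ j, C j, ∑ w,
        μ b * π t φ b * (∏ j, κ j (c j) b φ) * ν w b c * (f₁ φ b c w + f₂ φ b))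
      (∑ b, ∑ φ, ∑ c : ∀ j, C j, ∑ w,
        (μ b * π θ φ b * (∏ j, κ j (c j) b φ) * ν w b c) *
          (∑ φ', g φ' b *
            (((∏ j, κ j (c j) b φ') /
                (∑ φ'', π θ φ'' b * ∏ j, κ j (c j) b φ'')) * f₁ φ' b c w +
              f₂ φ' b))) θ :=
  fhnca_combined_unbiased_general μ π κ θ hπ1 hπpos hκpos hκ1 g hg ν hν1 f₁ f₂
end
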